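/- Let D ⊊ ℝⁿ be a bounded domain with diameter d. For all x, y ∈ D: m_D(x,y) ≥ |log(η(y)/η(x))|, where m_D is the infimal path-length metric with density d/η(z) and η(z) = δ(z)(d − δ(z)). -/

import Mathlib

/-!
Along a path, `log η` changes at most at rate `d / η` times the speed: `δ` is 1-Lipschitz, so
`log δ` and `log (d - δ)` have pointwise Lipschitz constants `1 / δ` and `1 / (d - δ)`, whose sum
is `d / η`. A fencing argument integrates this one-sided Dini bound along every `C¹` path from `x`
to `y`, and such paths exist because `D` is open and connected, so the infimum is taken over a
nonempty set.
-/

noncomputable def deltaD {n : ℕ} (D : Set (EuclideanSpace ℝ (Fin n)))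
    (z : EuclideanSpace ℝ (Fin n)) : ℝ :=
  Metric.infDist z (frontier D)

noncomputable def etaD {n : ℕ} (D : Set (EuclideanSpace ℝ (Fin n)))
    (z : EuclideanSpace ℝ (Fin n)) : ℝ :=
  deltaD D z * (Metric.diam D - deltaD D z)

/-- The length of a C¹ path with respect to the density `diam D / η`. -/
noncomputable def mLength {n : ℕ} (D : Set (EuclideanSpace ℝ (Fin n)))
    (γ : ℝ → EuclideanSpace ℝ (Fin n)) : ℝ :=
  ∫ t in (0:ℝ)..1, (Metric.diam D / etaD D (γ t)) * ‖deriv γ t‖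

/-- The infimal path-length metric `m_D` with density `diam D / η(z)`. -/
noncomputable def mDist {n : ℕ} (D : Set (EuclideanSpace ℝ (Fin n)))
    (x y : EuclideanSpace ℝ (Fin n)) : ℝ :=
  sInf { L : ℝ | ∃ γ : ℝ → EuclideanSpace ℝ (Fin n),
    ContDiffOn ℝ 1 γ (Set.Icc 0 1) ∧ γ 0 = x ∧ γ 1 = y ∧
    (∀ t ∈ Set.Icc (0:ℝ) 1, γ t ∈ D) ∧ L = mLength D γ }

open Set Metric Filter Topology
open scoped NNReal ContDiff

/-- `limsup_{y → x} |f y - f x| / dist y x ≤ c`. -/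
def LipConstAtLE {α : Type*} [PseudoMetricSpace α] (f : α → ℝ) (x : α) (c : ℝ) : Prop :=
  ∀ r > c, ∀ᶠ y in 𝓝 x, |f y - f x| ≤ r * dist y x

namespace LipConstAtLE

variable {α : Type*} [PseudoMetricSpace α] {f g : α → ℝ} {x : α} {c c' : ℝ}

theorem continuousAt (hf : LipConstAtLE f x c) : ContinuousAt f x := by
  have hr : |c| + 1 > c := by linarith [le_abs_self c]
  rw [ContinuousAt, tendsto_iff_dist_tendsto_zero]
  have hlim : Tendsto (fun y => (|c| + 1) * dist y x) (𝓝 x) (𝓝 0) := by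
    simpa using (tendsto_id.dist tendsto_const_nhds :
      Tendsto (fun y => dist y x) (𝓝 x) (𝓝 (dist x x))).const_mul (|c| + 1)
  refine squeeze_zero' (Eventually.of_forall fun _ => dist_nonneg) ?_ hlim
  filter_upwards [hf _ hr] with y hy
  rwa [Real.dist_eq]

theorem congr (hf : LipConstAtLE f x c) (hgf : g =ᶠ[𝓝 x] f) : LipConstAtLE g x c := by
  intro r hr
  filter_upwards [hf r hr, hgf] with y hy hy'
  rwa [hy', hgf.eq_of_nhds]

theorem add (hf : LipConstAtLE f x c) (hg : LipConstAtLE g x c') :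
    LipConstAtLE (fun y => f y + g y) x (c + c') := by
  intro r hr
  set ε := (r - c - c') / 2 with hε
  filter_upwards [hf (c + ε) (by linarith), hg (c' + ε) (by linarith)] with y hfy hgy
  calc |f y + g y - (f x + g x)| = |(f y - f x) + (g y - g x)| := by ring_nf
    _ ≤ |f y - f x| + |g y - g x| := abs_add_le _ _
    _ ≤ (c + ε) * dist y x + (c' + ε) * dist y x := add_le_add hfy hgy
    _ = r * dist y x := by rw [hε]; ring

end LipConstAtLE

theorem abs_log_sub_log_le_div_min {a b : ℝ} (ha : 0 < a) (hb : 0 < b) :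
    |Real.log a - Real.log b| ≤ |a - b| / min a b := by
  wlog h : b ≤ a generalizing a b
  · rw [abs_sub_comm, abs_sub_comm a b, min_comm]
    exact this hb ha (le_of_not_ge h)
  rw [min_eq_right h, abs_of_nonneg (sub_nonneg.2 (Real.log_le_log hb h)),
    abs_of_nonneg (sub_nonneg.2 h), ← Real.log_div ha.ne' hb.ne']
  calc Real.log (a / b) ≤ a / b - 1 := Real.log_le_sub_one_of_pos (by positivity)
    _ = (a - b) / b := by field_simp

theorem LipschitzWith.lipConstAtLE_log {α : Type*} [PseudoMetricSpace α] {φ : α → ℝ} {K : ℝ≥0}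
    (hφ : LipschitzWith K φ) {x : α} (hx : 0 < φ x) :
    LipConstAtLE (fun y => Real.log (φ y)) x (K / φ x) := by
  intro r hr
  have hr0 : 0 < r := lt_of_le_of_lt (by positivity) hr
  have hlow : K / r < φ x := by
    rw [div_lt_iff₀ hr0, mul_comm, ← div_lt_iff₀ hx]; exact hr
  filter_upwards [hφ.continuous.continuousAt.eventually (lt_mem_nhds hlow)] with y hy
  have hmin : K / r ≤ min (φ y) (φ x) := le_min hy.le hlow.le
  have hmin0 : 0 < min (φ y) (φ x) := lt_min (lt_of_le_of_lt (by positivity) hy) hx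
  calc |Real.log (φ y) - Real.log (φ x)| ≤ |φ y - φ x| / min (φ y) (φ x) :=
        abs_log_sub_log_le_div_min (lt_of_le_of_lt (by positivity) hy) hx
    _ ≤ r * dist y x := by
        rw [div_le_iff₀ hmin0, ← Real.dist_eq]
        calc dist (φ y) (φ x) ≤ K * dist y x := hφ.dist_le_mul y x
          _ ≤ (r * min (φ y) (φ x)) * dist y x := by
              gcongr; exact (div_le_iff₀' hr0).1 hmin
          _ = r * dist y x * min (φ y) (φ x) := by ring

section Domain

variable {n : ℕ} {D : Set (EuclideanSpace ℝ (Fin n))} {z : EuclideanSpace ℝ (Fin n)}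

theorem deltaD_pos (hD : IsOpen D) (hD' : D ≠ univ) (hz : z ∈ D) : 0 < deltaD D z := by
  refine (isClosed_frontier.notMem_iff_infDist_pos
    (nonempty_frontier_iff.2 ⟨⟨z, hz⟩, hD'⟩)).1 fun hzf => ?_
  rw [hD.frontier_eq] at hzf
  exact hzf.2 hz

theorem ball_deltaD_subset (hD' : D ≠ univ) (hz : z ∈ D) : ball z (deltaD D z) ⊆ D := by
  obtain ⟨w, hwf, hw⟩ := exists_mem_frontier_infDist_compl_eq_dist hz hD'
  have hle : deltaD D z ≤ infDist z Dᶜ := hw ▸ infDist_le_dist_of_mem hwf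
  exact (ball_subset_ball hle).trans ball_infDist_compl_subset

theorem two_mul_deltaD_le_diam (hD' : D ≠ univ) (hbdd : Bornology.IsBounded D) (hz : z ∈ D) :
    2 * deltaD D z ≤ diam D := by
  have : Nontrivial (EuclideanSpace ℝ (Fin n)) := by
    by_contra h
    rw [not_nontrivial_iff_subsingleton] at h
    exact hD' (eq_univ_of_forall fun w => Subsingleton.elim z w ▸ hz)
  rw [← diam_ball_eq z (show 0 ≤ deltaD D z from infDist_nonneg)]
  exact diam_mono (ball_deltaD_subset hD' hz) hbdd

theorem deltaD_lt_diam (hD : IsOpen D) (hD' : D ≠ univ) (hbdd : Bornology.IsBounded D)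
    (hz : z ∈ D) : deltaD D z < diam D := by
  linarith [two_mul_deltaD_le_diam hD' hbdd hz, deltaD_pos hD hD' hz]

theorem etaD_pos (hD : IsOpen D) (hD' : D ≠ univ) (hbdd : Bornology.IsBounded D) (hz : z ∈ D) :
    0 < etaD D z :=
  mul_pos (deltaD_pos hD hD' hz) (sub_pos.2 (deltaD_lt_diam hD hD' hbdd hz))

theorem continuous_etaD : Continuous (etaD D) := by
  have hδ : Continuous (deltaD D) := continuous_infDist_pt _
  exact hδ.mul (continuous_const.sub hδ)

theorem lipConstAtLE_log_etaD (hD : IsOpen D) (hD' : D ≠ univ) (hbdd : Bornology.IsBounded D)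
    (hz : z ∈ D) : LipConstAtLE (fun w => Real.log (etaD D w)) z (diam D / etaD D z) := by
  have hδ : LipschitzWith 1 (deltaD D) := lipschitz_infDist_pt _
  have hδ' : LipschitzWith 1 (fun w => diam D - deltaD D w) := by
    simpa using (LipschitzWith.const (diam D)).sub hδ
  have hsum := (hδ.lipConstAtLE_log (deltaD_pos hD hD' hz)).add
    (hδ'.lipConstAtLE_log (sub_pos.2 (deltaD_lt_diam hD hD' hbdd hz)))
  have hconst : ((1 : ℝ≥0) : ℝ) / deltaD D z + ((1 : ℝ≥0) : ℝ) / (diam D - deltaD D z)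
      = diam D / etaD D z := by
    have := deltaD_pos hD hD' hz
    have := sub_pos.2 (deltaD_lt_diam hD hD' hbdd hz)
    rw [NNReal.coe_one]
    unfold etaD
    field_simp
    ring
  rw [← hconst]
  refine hsum.congr ?_
  filter_upwards [hD.mem_nhds hz] with w hw
  exact Real.log_mul (deltaD_pos hD hD' hw).ne' (sub_pos.2 (deltaD_lt_diam hD hD' hbdd hw)).ne'

end Domain

theorem sub_le_integral_of_slope_lt {f g : ℝ → ℝ} {a b : ℝ} (hab : a ≤ b)
    (hf : ContinuousOn f (Icc a b)) (hg : Continuous g)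
    (hslope : ∀ t ∈ Ico a b, ∀ r, g t < r → ∃ᶠ z in 𝓝[>] t, slope f t z < r) :
    f b - f a ≤ ∫ t in a..b, g t := by
  have hB : ∀ u, HasDerivAt (fun u => f a + ∫ t in a..u, g t) (g u) u := fun u =>
    ((hg.integral_hasStrictDerivAt a u).hasDerivAt).const_add _
  have := image_le_of_liminf_slope_right_le_deriv_boundary hf (by simp)
    (fun u _ => (hB u).continuousAt.continuousWithinAt) (fun u _ => (hB u).hasDerivWithinAt)
    hslope (right_mem_Icc.2 hab)
  linarith

theorem abs_sub_le_integral_of_abs_slope_lt {f g : ℝ → ℝ} {a b : ℝ} (hab : a ≤ b)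
    (hf : ContinuousOn f (Icc a b)) (hg : ContinuousOn g (Icc a b))
    (hslope : ∀ t ∈ Ico a b, ∀ r, g t < r → ∀ᶠ z in 𝓝[>] t, |slope f t z| < r) :
    |f b - f a| ≤ ∫ t in a..b, g t := by
  set G := IccExtend hab ((Icc a b).domRestrict g)
  have hG : Continuous G := (continuousOn_iff_continuous_domRestrict.1 hg).Icc_extend'
  have hGg : EqOn G g (Icc a b) := fun t ht => IccExtend_of_mem hab _ ht
  have hslopeG : ∀ t ∈ Ico a b, ∀ r, G t < r → ∀ᶠ z in 𝓝[>] t, |slope f t z| < r :=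
    fun t ht r hr => hslope t ht r (hGg (Ico_subset_Icc_self ht) ▸ hr)
  rw [← intervalIntegral.integral_congr (hGg.mono (uIcc_of_le hab).subset)]
  have hup := sub_le_integral_of_slope_lt hab hf hG fun t ht r hr =>
    ((hslopeG t ht r hr).mono fun z hz => (le_abs_self _).trans_lt hz).frequently
  have hdown := sub_le_integral_of_slope_lt hab hf.neg hG fun t ht r hr =>
    ((hslopeG t ht r hr).mono fun z hz => by
      rw [slope_neg_fun, Pi.neg_apply]; exact (neg_le_abs _).trans_lt hz).frequently
  simp only [Pi.neg_apply] at hdown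
  exact abs_le.2 ⟨by linarith, hup⟩

section Path

variable {E : Type*} [NormedAddCommGroup E] [NormedSpace ℝ E]

theorem LipConstAtLE.eventually_abs_slope_comp_lt {h : E → ℝ} {γ : ℝ → E} {γ' : E} {t c r : ℝ}
    (hh : LipConstAtLE h (γ t) c) (hγ : HasDerivWithinAt γ γ' (Ioi t) t) (hr : c * ‖γ'‖ < r) :
    ∀ᶠ z in 𝓝[>] t, |slope (h ∘ γ) t z| < r := by
  have hc : ∀ᶠ c' in 𝓝[>] c, c' * ‖γ'‖ < r ∧ c < c' :=
    (((continuous_mul_const ‖γ'‖).tendsto c).eventually (eventually_lt_nhds hr)).filter_mono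
      nhdsWithin_le_nhds |>.and self_mem_nhdsWithin
  obtain ⟨c', hc'r, hc'⟩ := hc.exists
  have hslope : Tendsto (fun z => c' * ‖slope γ t z‖) (𝓝[>] t) (𝓝 (c' * ‖γ'‖)) :=
    ((hasDerivWithinAt_iff_tendsto_slope' self_notMem_Ioi).1 hγ).norm.const_mul c'
  filter_upwards [hslope.eventually (eventually_lt_nhds hc'r),
    hγ.continuousWithinAt.tendsto.eventually (hh c' hc'), self_mem_nhdsWithin]
    with z hz hhz hzt
  have hzt : 0 < z - t := sub_pos.2 hzt
  calc |slope (h ∘ γ) t z| = |h (γ z) - h (γ t)| / (z - t) := by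
        rw [slope_def_field, abs_div, abs_of_pos hzt]; rfl
    _ ≤ c' * dist (γ z) (γ t) / (z - t) := by gcongr
    _ = c' * ‖slope γ t z‖ := by
        rw [slope_def_module, norm_smul, norm_inv, Real.norm_eq_abs, abs_of_pos hzt,
          dist_eq_norm]
        ring
    _ < r := hz

theorem abs_sub_le_integral_of_lipConstAtLE {h ρ : E → ℝ} {γ : ℝ → E} {a b : ℝ} (hab : a < b)
    (hγ : ContDiffOn ℝ 1 γ (Icc a b)) (hρ : ContinuousOn (fun t => ρ (γ t)) (Icc a b))
    (hh : ∀ t ∈ Icc a b, LipConstAtLE h (γ t) (ρ (γ t))) :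
    |h (γ b) - h (γ a)| ≤ ∫ t in a..b, ρ (γ t) * ‖deriv γ t‖ := by
  have hderiv : ∀ t ∈ Icc a b, HasDerivWithinAt γ (derivWithin γ (Icc a b) t) (Icc a b) t :=
    fun t ht => ((hγ.differentiableOn one_ne_zero) t ht).hasDerivWithinAt
  have hγ' : ContinuousOn (derivWithin γ (Icc a b)) (Icc a b) :=
    hγ.continuousOn_derivWithin (uniqueDiffOn_Icc hab) le_rfl
  have hcomp : ContinuousOn (h ∘ γ) (Icc a b) := fun t ht =>
    (hh t ht).continuousAt.comp_continuousWithinAt (hγ.continuousOn t ht)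
  calc |h (γ b) - h (γ a)| ≤ ∫ t in a..b, ρ (γ t) * ‖derivWithin γ (Icc a b) t‖ :=
        abs_sub_le_integral_of_abs_slope_lt hab.le hcomp (hρ.mul hγ'.norm) fun t ht _ hr =>
          (hh t (Ico_subset_Icc_self ht)).eventually_abs_slope_comp_lt
            ((hderiv t (Ico_subset_Icc_self ht)).mono_of_mem_nhdsWithin
              (Icc_mem_nhdsGT_of_mem ht)) hr
    _ = ∫ t in a..b, ρ (γ t) * ‖deriv γ t‖ :=
        intervalIntegral.integral_congr_Ioo_of_le hab.le fun t ht => by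
          simp only [derivWithin_of_mem_nhds (Icc_mem_nhds ht.1 ht.2)]

/-- The path is constant outside `[0, 1]` so that concatenating two such paths stays smooth. -/
def ContDiffJoinedIn (F : Set E) (x y : E) : Prop :=
  ∃ γ : ℝ → E, ContDiff ℝ ∞ γ ∧ (∀ t ≤ 0, γ t = x) ∧ (∀ t, 1 ≤ t → γ t = y) ∧ ∀ t, γ t ∈ F

namespace ContDiffJoinedIn

variable {F : Set E} {x y z : E}

theorem of_segment_subset (h : segment ℝ x y ⊆ F) : ContDiffJoinedIn F x y := by
  refine ⟨fun t => x + Real.smoothTransition t • (y - x),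
    contDiff_const.add (Real.smoothTransition.contDiff.smul contDiff_const),
    fun t ht => by simp [Real.smoothTransition.zero_of_nonpos ht],
    fun t ht => by simp [Real.smoothTransition.one_of_one_le ht], fun t => h ?_⟩
  rw [segment_eq_image']
  exact ⟨_, ⟨Real.smoothTransition.nonneg t, Real.smoothTransition.le_one t⟩, rfl⟩

theorem symm (h : ContDiffJoinedIn F x y) : ContDiffJoinedIn F y x := by
  obtain ⟨γ, hγ, h0, h1, hF⟩ := h
  exact ⟨fun t => γ (1 - t), hγ.comp (contDiff_const.sub contDiff_id),
    fun t ht => h1 _ (by linarith), fun t ht => h0 _ (by linarith), fun t => hF _⟩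

theorem trans (hxy : ContDiffJoinedIn F x y) (hyz : ContDiffJoinedIn F y z) :
    ContDiffJoinedIn F x z := by
  obtain ⟨γ, hγ, hγ0, hγ1, hγF⟩ := hxy
  obtain ⟨σ, hσ, hσ0, hσ1, hσF⟩ := hyz
  have hleft : ∀ t ≤ 1 / 2, σ (2 * t - 1) - y = 0 := fun t ht => by
    rw [hσ0 _ (by linarith), sub_self]
  have hright : ∀ t, 1 / 2 ≤ t → γ (2 * t) = y := fun t ht => hγ1 _ (by linarith)
  refine ⟨fun t => γ (2 * t) + (σ (2 * t - 1) - y),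
    (hγ.comp (contDiff_const.mul contDiff_id)).add
      ((hσ.comp ((contDiff_const.mul contDiff_id).sub contDiff_const)).sub contDiff_const),
    fun t ht => by simp [hleft t (by linarith), hγ0 (2 * t) (by linarith)],
    fun t ht => by simp [hright t (by linarith), hσ1 (2 * t - 1) (by linarith)], fun t => ?_⟩
  rcases le_total t (1 / 2) with ht | ht
  · simpa [hleft t ht] using hγF (2 * t)
  · simpa [hright t ht] using hσF (2 * t - 1)

end ContDiffJoinedIn

theorem IsOpen.contDiffJoinedIn {F : Set E} (hF : IsOpen F) (hF' : IsPreconnected F) {x y : E}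
    (hx : x ∈ F) (hy : y ∈ F) : ContDiffJoinedIn F x y := by
  refine hF'.induction₂ _ (fun x hx => ?_) (fun _ _ _ _ _ _ => .trans)
    (fun _ _ _ _ => .symm) hx hy
  obtain ⟨ε, hε, hball⟩ := Metric.isOpen_iff.1 hF x hx
  filter_upwards [nhdsWithin_le_nhds (ball_mem_nhds x hε)] with y hy
  exact .of_segment_subset (((convex_ball x ε).segment_subset (mem_ball_self hε) hy).trans hball)

end Path

theorem stmt_17_general {n : ℕ} (D : Set (EuclideanSpace ℝ (Fin n)))
    (hopen : IsOpen D) (hconn : IsConnected D) (hproper : D ≠ Set.univ)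
    (hbdd : Bornology.IsBounded D)
    (x y : EuclideanSpace ℝ (Fin n)) (hx : x ∈ D) (hy : y ∈ D) :
    |Real.log (etaD D y / etaD D x)| ≤ mDist D x y := by
  obtain ⟨γ, hγ, hγ0, hγ1, hγD⟩ := hopen.contDiffJoinedIn hconn.isPreconnected hx hy
  rw [mDist, Real.log_div (etaD_pos hopen hproper hbdd hy).ne' (etaD_pos hopen hproper hbdd hx).ne']
  refine le_csInf ⟨_, γ, (hγ.of_le (by simp)).contDiffOn, hγ0 0 le_rfl, hγ1 1 le_rfl,
    fun t _ => hγD t, rfl⟩ ?_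
  rintro _ ⟨σ, hσ, rfl, rfl, hσD, rfl⟩
  refine abs_sub_le_integral_of_lipConstAtLE (h := fun w => Real.log (etaD D w))
    (ρ := fun w => diam D / etaD D w) zero_lt_one hσ ?_
    fun t ht => lipConstAtLE_log_etaD hopen hproper hbdd (hσD t ht)
  exact continuousOn_const.div (continuous_etaD.comp_continuousOn hσ.continuousOn)
    fun t ht => (etaD_pos hopen hproper hbdd (hσD t ht)).ne'

theorem stmt_17 {n : ℕ} (hn : 2 ≤ n) (D : Set (EuclideanSpace ℝ (Fin n)))
    (hopen : IsOpen D) (hconn : IsConnected D) (hproper : D ≠ Set.univ)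
    (hbdd : Bornology.IsBounded D)
    (x y : EuclideanSpace ℝ (Fin n)) (hx : x ∈ D) (hy : y ∈ D) :
    |Real.log (etaD D y / etaD D x)| ≤ mDist D x y :=
  stmt_17_general D hopen hconn hproper hbdd x y hx hy
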